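/- Let u : ℝ → ℝ be twice continuously differentiable with u' > 0 and u'' < 0, let ħ : [0,1] → ℝ be nonnegative, λ > 0, φ : [0,1] → ℝ continuous. Suppose δ ∈ C²[0,1] is concave, δ' takes values in the range of u', and min{ δ''(p) − ħ(p)·u''((u')⁻¹(δ'(p))), λφ(p) − δ(p) } = 0 a.e. on [0,1]. Define Q̄(p) := (u')⁻¹(δ'(p)). Then the complementary-slackness identity (Q̄'(p) − ħ(p))·(λφ(p) − δ(p)) = 0 holds for a.e. p ∈ [0,1], and consequently ∫₀¹ λ (Q̄'(p) − ħ(p)) φ(p) dp = ∫₀¹ (Q̄'(p) − ħ(p)) δ(p) dp. -/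

import Mathlib

open MeasureTheory Set

/-! The inverse function theorem and the chain rule give `Q̄' = δ'' / u''(Q̄)`. Where the first
term of the minimum vanishes this is `ħ`, so the first factor of the product vanishes; elsewhere
`λφ = δ`. -/

theorem HasStrictDerivAt.hasStrictDerivAt_invFun {𝕜 : Type*} [NontriviallyNormedField 𝕜]
    [CompleteSpace 𝕜] {f : 𝕜 → 𝕜} {f' a : 𝕜} (hf : HasStrictDerivAt f f' a) (hf' : f' ≠ 0)
    (hinj : Function.Injective f) :
    HasStrictDerivAt (Function.invFun f) f'⁻¹ (f a) :=
  hf.to_local_left_inverse hf' (.of_forall (Function.leftInverse_invFun hinj))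

theorem hasDerivAt_invFun_deriv {u : ℝ → ℝ} (hu : ContDiff ℝ 2 u)
    (hu'' : ∀ x, deriv (deriv u) x < 0) {y : ℝ} (hy : y ∈ range (deriv u)) :
    HasDerivAt (Function.invFun (deriv u))
      (deriv (deriv u) (Function.invFun (deriv u) y))⁻¹ y := by
  obtain ⟨x, rfl⟩ := hy
  have hinj : Function.Injective (deriv u) := (strictAnti_of_deriv_neg hu'').injective
  have hu'C1 : ContDiff ℝ 1 (deriv u) := hu.iterate_deriv' 1 1
  rw [Function.leftInverse_invFun hinj x]
  exact ((hu'C1.hasStrictDerivAt one_ne_zero).hasStrictDerivAt_invFun (hu'' x).ne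
    hinj).hasDerivAt

theorem derivWithin_invFun_deriv_comp {u : ℝ → ℝ} (hu : ContDiff ℝ 2 u)
    (hu'' : ∀ x, deriv (deriv u) x < 0) {g : ℝ → ℝ} {s : Set ℝ} {p : ℝ}
    (hs : UniqueDiffWithinAt ℝ s p) (hg : DifferentiableWithinAt ℝ g s p)
    (hgp : g p ∈ range (deriv u)) :
    derivWithin (fun q => Function.invFun (deriv u) (g q)) s p =
      (deriv (deriv u) (Function.invFun (deriv u) (g p)))⁻¹ * derivWithin g s p :=
  ((hasDerivAt_invFun_deriv hu hu'' hgp).comp_hasDerivWithinAt p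
    hg.hasDerivWithinAt).derivWithin hs

theorem inv_mul_sub_mul_eq_zero_of_min_eq_zero {K : Type*} [Field K] [LinearOrder K]
    {a b c h : K} (hc : c ≠ 0) (hmin : min (a - h * c) b = 0) :
    (c⁻¹ * a - h) * b = 0 := by
  rcases min_choice (a - h * c) b with hab | hab <;> rw [hab] at hmin
  · rw [sub_eq_zero.mp hmin, mul_comm h, inv_mul_cancel_left₀ hc, sub_self, zero_mul]
  · rw [hmin, mul_zero]

theorem fbp_complementary_slackness_general
    (u : ℝ → ℝ) (hu : ContDiff ℝ 2 u)
    (hu'' : ∀ x, deriv (deriv u) x < 0)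
    (hbar : ℝ → ℝ)
    (lam : ℝ)
    (φ : ℝ → ℝ)
    (δ : ℝ → ℝ) (hδC2 : ContDiffOn ℝ 2 δ (Set.Icc 0 1))
    (hrange : ∀ p ∈ Set.Icc (0 : ℝ) 1,
      derivWithin δ (Set.Icc 0 1) p ∈ Set.range (deriv u))
    (hFBP : ∀ᵐ p ∂(MeasureTheory.volume.restrict (Set.Icc (0 : ℝ) 1)),
      min (derivWithin (derivWithin δ (Set.Icc 0 1)) (Set.Icc 0 1) p -
            hbar p * deriv (deriv u)
              (Function.invFun (deriv u) (derivWithin δ (Set.Icc 0 1) p)))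
          (lam * φ p - δ p) = 0) :
    (∀ᵐ p ∂(MeasureTheory.volume.restrict (Set.Icc (0 : ℝ) 1)),
      (derivWithin (fun q => Function.invFun (deriv u) (derivWithin δ (Set.Icc 0 1) q))
          (Set.Icc 0 1) p - hbar p) * (lam * φ p - δ p) = 0) ∧
    (∫ p in Set.Icc (0 : ℝ) 1,
        lam * (derivWithin (fun q => Function.invFun (deriv u) (derivWithin δ (Set.Icc 0 1) q))
          (Set.Icc 0 1) p - hbar p) * φ p) =
      ∫ p in Set.Icc (0 : ℝ) 1,
        (derivWithin (fun q => Function.invFun (deriv u) (derivWithin δ (Set.Icc 0 1) q))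
          (Set.Icc 0 1) p - hbar p) * δ p := by
  have hIcc : UniqueDiffOn ℝ (Icc (0 : ℝ) 1) := uniqueDiffOn_Icc one_pos
  have hδ' : DifferentiableOn ℝ (derivWithin δ (Icc 0 1)) (Icc 0 1) :=
    (hδC2.derivWithin hIcc (m := 1) (by norm_num)).differentiableOn one_ne_zero
  have hslack : ∀ᵐ p ∂(volume.restrict (Icc (0 : ℝ) 1)),
      (derivWithin (fun q => Function.invFun (deriv u) (derivWithin δ (Icc 0 1) q))
          (Icc 0 1) p - hbar p) * (lam * φ p - δ p) = 0 := by
    filter_upwards [hFBP, ae_restrict_mem measurableSet_Icc] with p hmin hp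
    rw [derivWithin_invFun_deriv_comp hu hu'' (hIcc p hp) (hδ' p hp) (hrange p hp)]
    exact inv_mul_sub_mul_eq_zero_of_min_eq_zero (hu'' _).ne hmin
  refine ⟨hslack, integral_congr_ae ?_⟩
  filter_upwards [hslack] with p hp
  linear_combination hp

/-- **Complementary slackness**: for the candidate optimizer `Q̄ := (u')⁻¹ ∘ δ'` built
from a concave `C²` solution `δ` of the free boundary problem, the identity
`(Q̄' - hbar)(λφ - δ) = 0` holds a.e. on `[0,1]`, and consequently
`∫₀¹ λ(Q̄' - hbar)φ = ∫₀¹ (Q̄' - hbar)δ`. -/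
theorem fbp_complementary_slackness
    (u : ℝ → ℝ) (hu : ContDiff ℝ 2 u)
    (hu' : ∀ x, 0 < deriv u x) (hu'' : ∀ x, deriv (deriv u) x < 0)
    (hbar : ℝ → ℝ) (hbar0 : ∀ p ∈ Set.Icc (0 : ℝ) 1, 0 ≤ hbar p)
    (lam : ℝ) (hlam : 0 < lam)
    (φ : ℝ → ℝ) (hφc : ContinuousOn φ (Set.Icc 0 1))
    (δ : ℝ → ℝ) (hδC2 : ContDiffOn ℝ 2 δ (Set.Icc 0 1))
    (hδconc : ConcaveOn ℝ (Set.Icc 0 1) δ)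
    (hrange : ∀ p ∈ Set.Icc (0 : ℝ) 1,
      derivWithin δ (Set.Icc 0 1) p ∈ Set.range (deriv u))
    (hFBP : ∀ᵐ p ∂(MeasureTheory.volume.restrict (Set.Icc (0 : ℝ) 1)),
      min (derivWithin (derivWithin δ (Set.Icc 0 1)) (Set.Icc 0 1) p -
            hbar p * deriv (deriv u)
              (Function.invFun (deriv u) (derivWithin δ (Set.Icc 0 1) p)))
          (lam * φ p - δ p) = 0) :
    (∀ᵐ p ∂(MeasureTheory.volume.restrict (Set.Icc (0 : ℝ) 1)),
      (derivWithin (fun q => Function.invFun (deriv u) (derivWithin δ (Set.Icc 0 1) q))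
          (Set.Icc 0 1) p - hbar p) * (lam * φ p - δ p) = 0) ∧
    (∫ p in Set.Icc (0 : ℝ) 1,
        lam * (derivWithin (fun q => Function.invFun (deriv u) (derivWithin δ (Set.Icc 0 1) q))
          (Set.Icc 0 1) p - hbar p) * φ p) =
      ∫ p in Set.Icc (0 : ℝ) 1,
        (derivWithin (fun q => Function.invFun (deriv u) (derivWithin δ (Set.Icc 0 1) q))
          (Set.Icc 0 1) p - hbar p) * δ p :=
  fbp_complementary_slackness_general u hu hu'' hbar lam φ δ hδC2 hrange hFBP
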